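/- arXiv:2507.20772 — 2 statements merged into one kernel-verified Lean document; each statement's English description precedes it below -/
import Mathlib

section
/- Let λ̊ : ℝ → ℝ, λ : ℝ → ℝ³, and ω̃ : ℝ → ℝ³ be such that for all t: λ̊(t)² + ‖λ(t)‖² = 1, HasDerivAt λ̊ (-(1/2) * ⟪ω̃ t, λ t⟫) t, and HasDerivAt λ ((1/2) • (λ̊ t • ω̃ t + λ t ×₃ ω̃ t)) t. Define R̃ t := 1 + 2 • (S(λ t) * (λ̊ t • 1 + S(λ t))), the Rodrigues matrix of the unit quaternion curve. Then for every t, HasDerivAt R̃ (R̃ t * S(ω̃ t)) t; i.e. the quaternion kinematic equations imply the rotation kinematics dR̃/dt = R̃ S(ω̃). -/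
/-!
Since `R(λ̊, λ)` is a polynomial in `(λ̊, λ)`, the product rule differentiates it along the curve.
Substituting the quaternion kinematics, the derivative becomes `R S(ω̃) + (λ̊² + ‖λ‖² - 1) S(ω̃)`,
a polynomial identity in the coordinates, and the defect term vanishes on unit quaternions.
-/

open Matrix
noncomputable section

/-- `ℝ³` as Euclidean space (vectors `Fin 3 → ℝ` with the Euclidean norm). -/
abbrev R3 : Type := EuclideanSpace ℝ (Fin 3)

/-- Skew-symmetric cross-product matrix `S(x)` of a vector `x ∈ ℝ³`. -/
def S (x : R3) : Matrix (Fin 3) (Fin 3) ℝ :=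
  !![0, -x 2, x 1; x 2, 0, -x 0; -x 1, x 0, 0]

/-- Projection matrix `Π_y := I - y yᵀ` onto the plane orthogonal to `y`. -/
def proj (y : R3) : Matrix (Fin 3) (Fin 3) ℝ := 1 - Matrix.vecMulVec y y

/-- Matrix–vector product, with the result regarded as an element of `ℝ³`
(so that `‖·‖` is the Euclidean norm). -/
def mulv (M : Matrix (Fin 3) (Fin 3) ℝ) (v : R3) : R3 := WithLp.toLp 2 (M.mulVec v)

/-- Cross product `×₃` regarded as an operation on `ℝ³`. -/
def cross (a b : R3) : R3 := WithLp.toLp 2 (a ⨯₃ b)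

/-- Rodrigues rotation matrix `R(λ̊, λ) := I + 2 S(λ)(λ̊ I + S(λ))` of a
quaternion pair `(λ̊, λ)`. -/
def rod (q0 : ℝ) (qv : R3) : Matrix (Fin 3) (Fin 3) ℝ :=
  1 + 2 • (S qv * (q0 • 1 + S qv))

attribute [local instance] Matrix.normedAddCommGroup Matrix.normedSpace

open scoped RealInnerProductSpace

section MatrixCalculus

variable {𝕜 : Type*} [NontriviallyNormedField 𝕜] {l m n : Type*} [Fintype m] [Fintype n]
  {f : 𝕜 → Matrix l m 𝕜} {g : 𝕜 → Matrix m n 𝕜} {f' : Matrix l m 𝕜} {g' : Matrix m n 𝕜} {t : 𝕜}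

theorem Matrix.hasDerivAt_iff_entries :
    HasDerivAt f f' t ↔ ∀ i j, HasDerivAt (fun s => f s i j) (f' i j) t :=
  ⟨fun h i j => hasDerivAt_pi.1 (hasDerivAt_pi.1 h i) j,
    fun h => hasDerivAt_pi.2 fun i => hasDerivAt_pi.2 (h i)⟩

theorem HasDerivAt.matrix_mul (hf : HasDerivAt f f' t) (hg : HasDerivAt g g' t) :
    HasDerivAt (fun s => f s * g s) (f' * g t + f t * g') t := by
  rw [Matrix.hasDerivAt_iff_entries] at hf hg ⊢
  intro i j
  simp only [Matrix.mul_apply, Matrix.add_apply, ← Finset.sum_add_distrib]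
  exact HasDerivAt.fun_sum fun k _ => (hf i k).mul (hg k j)

end MatrixCalculus

theorem S_add (x y : R3) : S (x + y) = S x + S y := by
  ext i j
  fin_cases i <;> fin_cases j <;> simp [S] <;> ring

theorem S_smul (c : ℝ) (x : R3) : S (c • x) = c • S x := by
  ext i j
  fin_cases i <;> fin_cases j <;> simp [S]

theorem HasDerivAt.S {q : ℝ → R3} {v : R3} {t : ℝ} (h : HasDerivAt q v t) :
    HasDerivAt (fun s => S (q s)) (S v) t :=
  (LinearMap.toContinuousLinearMap ⟨⟨_root_.S, S_add⟩, S_smul⟩ : R3 →L[ℝ] Matrix (Fin 3) (Fin 3) ℝ)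
    |>.hasFDerivAt.comp_hasDerivAt t h

def rodDeriv (q0 : ℝ) (q : R3) (a : ℝ) (v : R3) : Matrix (Fin 3) (Fin 3) ℝ :=
  2 • (S v * (q0 • 1 + S q) + S q * (a • 1 + S v))

theorem HasDerivAt.rod {q0 : ℝ → ℝ} {q : ℝ → R3} {a : ℝ} {v : R3} {t : ℝ}
    (h0 : HasDerivAt q0 a t) (hq : HasDerivAt q v t) :
    HasDerivAt (fun s => rod (q0 s) (q s)) (rodDeriv (q0 t) (q t) a v) t :=
  ((hq.S.matrix_mul ((h0.smul_const 1).add hq.S)).const_smul 2).const_add 1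

theorem rodDeriv_quaternion_kinematics (q0 : ℝ) (q w : R3) :
    rodDeriv q0 q (-(1 / 2) * ⟪w, q⟫) ((1 / 2 : ℝ) • (q0 • w + cross q w))
      = rod q0 q * S w + (q0 ^ 2 + ⟪q, q⟫ - 1) • S w := by
  simp only [rodDeriv, PiLp.inner_apply, Fin.sum_univ_three]
  ext i j
  fin_cases i <;> fin_cases j <;>
    simp [rod, S, cross, crossProduct, Matrix.one_fin_three] <;> ring

/-- the quaternion kinematic equations imply the rotation
kinematics of the associated Rodrigues matrix. -/
theorem stmt_13 (q0 : ℝ → ℝ) (qv wt : ℝ → R3)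
    (hunit : ∀ t, (q0 t) ^ 2 + ‖qv t‖ ^ 2 = 1)
    (hq0 : ∀ t, HasDerivAt q0 (-(1 / 2) * ⟪wt t, qv t⟫) t)
    (hqv : ∀ t,
      HasDerivAt qv ((1 / 2 : ℝ) • (q0 t • wt t + cross (qv t) (wt t))) t) :
    ∀ t, HasDerivAt (fun s => rod (q0 s) (qv s))
      (rod (q0 t) (qv t) * S (wt t)) t := by
  intro t
  have hdefect : q0 t ^ 2 + ⟪qv t, qv t⟫ - 1 = 0 := by
    rw [real_inner_self_eq_norm_sq, hunit, sub_self]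
  have h := (hq0 t).rod (hqv t)
  rwa [rodDeriv_quaternion_kinematics, hdefect, zero_smul, add_zero] at h
end
end

section
/- Let R̂, R̂_j be real 3×3 matrices in SO(3), let (λ̊, λ) ∈ ℝ × ℝ³ with λ̊² + ‖λ‖² = 1 and λ̊ ≥ 0, and set R := R̂ * R(λ̊, λ) where R(λ̊, λ) := 1 + 2 • (S(λ) * (λ̊ • 1 + S(λ))). Let p, p̂_j, p̄_j ∈ ℝ³ with p - Rᵀ *ᵥ p̄_j ≠ 0, define the bearing g := ‖p - Rᵀ *ᵥ p̄_j‖⁻¹ • (p - Rᵀ *ᵥ p̄_j), the projector Π_g := 1 - Matrix.vecMulVec g g, the measurement y := Π_g *ᵥ (R̂ᵀ *ᵥ (R̂_j *ᵥ p̂_j)), the vector z := R̂ᵀ *ᵥ (R̂_j *ᵥ p̂_j), and d := Π_g *ᵥ (R̂ᵀ *ᵥ (p̄_j - R̂_j *ᵥ p̂_j)). Then ‖y - (Π_g *ᵥ p - Π_g *ᵥ (z ×₃ (2 • λ)) - d)‖ ≤ 4 * ‖λ‖² * ‖p̄_j‖ + 2 * ‖λ‖ * ‖p̄_j - R̂_j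 *ᵥ p̂_j‖. (This is the quantitative version of the paper's measurement representation y_{ij} = -Π_{g_{ij}} S(R̂_iᵀ R̂_j p̂_j)(2λ_i) + Π_{g_{ij}} p_i - D_{ij} + O(|p̄_j||λ_i|²) + O(|p̄_j - R̂_j p̂_j||λ_i|).) -/
/-!
Put `w := R̂ᵀ p̄_j` and `e := R̂ᵀ (p̄_j - R̂_j p̂_j)`, so that `z = w - e` and `Rᵀ p̄_j = R(λ̊, λ)ᵀ w`.
The projector `Π_g` annihilates `p - Rᵀ p̄_j`, so the residual is `Π_g` applied to
`w - R(λ̊, λ)ᵀ w + (w - e) × 2λ`, which by Rodrigues' formula equals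
`2(λ̊ - 1) λ × w - 2 λ × (λ × w) + 2 λ × e`. Now `Π_g` is a contraction, `R̂ᵀ` is an isometry,
and `0 ≤ 1 - λ̊ ≤ ‖λ‖² ≤ 1` on the upper unit hemisphere.
-/

open Matrix
noncomputable section

lemma mulv_sub (M : Matrix (Fin 3) (Fin 3) ℝ) (a b : R3) :
    mulv M (a - b) = mulv M a - mulv M b := by
  simp [mulv, mulVec_sub]

lemma mulv_add (M : Matrix (Fin 3) (Fin 3) ℝ) (a b : R3) :
    mulv M (a + b) = mulv M a + mulv M b := by
  simp [mulv, mulVec_add]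

lemma mulv_mul (A B : Matrix (Fin 3) (Fin 3) ℝ) (v : R3) :
    mulv (A * B) v = mulv A (mulv B v) := by
  simp [mulv, mulVec_mulVec]

lemma norm_sq_eq_dotProduct (v : R3) : ‖v‖ ^ 2 = v ⬝ᵥ v := by
  rw [← real_inner_self_eq_norm_sq]
  rfl

lemma norm_mulv_of_transpose_mul_self {M : Matrix (Fin 3) (Fin 3) ℝ} (hM : Mᵀ * M = 1)
    (v : R3) : ‖mulv M v‖ = ‖v‖ := by
  refine (sq_eq_sq₀ (norm_nonneg _) (norm_nonneg _)).1 ?_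
  rw [norm_sq_eq_dotProduct, norm_sq_eq_dotProduct, mulv, dotProduct_mulVec,
    ← vecMul_transpose, vecMul_vecMul, hM, vecMul_one]

lemma norm_cross_le (a b : R3) : ‖cross a b‖ ≤ ‖a‖ * ‖b‖ := by
  refine (sq_le_sq₀ (norm_nonneg _) (by positivity)).1 ?_
  rw [mul_pow, norm_sq_eq_dotProduct, norm_sq_eq_dotProduct, norm_sq_eq_dotProduct, cross,
    cross_dot_cross, dotProduct_comm b.ofLp a.ofLp]
  nlinarith [sq_nonneg (a.ofLp ⬝ᵥ b.ofLp)]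

lemma cross_sub_two_smul (w e qv : R3) :
    cross (w - e) (2 • qv) = (2 : ℝ) • cross qv e - (2 : ℝ) • cross qv w := by
  ext i
  fin_cases i <;> simp [cross, crossProduct] <;> ring

lemma mulv_proj (g v : R3) : mulv (proj g) v = v - inner ℝ g v • g := by
  ext i
  simp [mulv, proj, sub_mulVec, vecMulVec_mulVec, EuclideanSpace.inner_eq_star_dotProduct,
    dotProduct_comm]

lemma mulv_proj_inv_norm_smul_self (u : R3) : mulv (proj (‖u‖⁻¹ • u)) u = 0 := by
  rcases eq_or_ne u 0 with rfl | hu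
  · simp [mulv]
  have hscalar : ‖u‖⁻¹ * ‖u‖ ^ 2 * ‖u‖⁻¹ = 1 := by
    field_simp [norm_ne_zero_iff.2 hu]
  rw [mulv_proj, real_inner_smul_left, real_inner_self_eq_norm_sq, smul_smul, hscalar, one_smul,
    sub_self]

lemma norm_mulv_proj_le {g : R3} (hg : ‖g‖ ≤ 1) (v : R3) : ‖mulv (proj g) v‖ ≤ ‖v‖ := by
  refine (sq_le_sq₀ (norm_nonneg _) (norm_nonneg _)).1 ?_
  rw [mulv_proj, norm_sub_sq_real, inner_smul_right, norm_smul, mul_pow, Real.norm_eq_abs,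
    sq_abs, real_inner_comm]
  have hg2 : ‖g‖ ^ 2 ≤ 1 := by nlinarith [norm_nonneg g]
  nlinarith [sq_nonneg (inner ℝ g v)]

lemma norm_inv_norm_smul_le_one (u : R3) : ‖‖u‖⁻¹ • u‖ ≤ 1 := by
  rw [norm_smul, norm_inv, norm_norm]
  exact inv_mul_le_one_of_le₀ le_rfl (norm_nonneg u)

lemma S_mulVec (x : R3) (v : Fin 3 → ℝ) : S x *ᵥ v = x ⨯₃ v := by
  ext i
  fin_cases i <;> simp [S, crossProduct, mulVec, dotProduct, Fin.sum_univ_three] <;> ring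

lemma S_transpose (x : R3) : (S x)ᵀ = -S x := by
  ext i j
  fin_cases i <;> fin_cases j <;> simp [S]

lemma rod_transpose (q0 : ℝ) (qv : R3) :
    (rod q0 qv)ᵀ = 1 - (2 * q0) • S qv + (2 : ℝ) • (S qv * S qv) := by
  simp only [rod, transpose_add, transpose_one, transpose_smul, transpose_mul, S_transpose]
  simp only [add_mul, neg_mul, mul_neg, smul_mul_assoc, one_mul]
  module

lemma mulv_rod_transpose (q0 : ℝ) (qv w : R3) :
    mulv (rod q0 qv)ᵀ w = w - (2 * q0) • cross qv w + (2 : ℝ) • cross qv (cross qv w) := by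
  ext i
  simp [rod_transpose, mulv, cross, add_mulVec, sub_mulVec, smul_mulVec, ← mulVec_mulVec,
    S_mulVec]

lemma sub_mulv_rod_transpose_add_cross (q0 : ℝ) (qv w e : R3) :
    w - mulv (rod q0 qv)ᵀ w + cross (w - e) (2 • qv) =
      (2 * (q0 - 1)) • cross qv w - (2 : ℝ) • cross qv (cross qv w) + (2 : ℝ) • cross qv e := by
  rw [mulv_rod_transpose, cross_sub_two_smul]
  module

lemma norm_rodrigues_residual_le {q0 : ℝ} {qv : R3} (hq : q0 ^ 2 + ‖qv‖ ^ 2 = 1)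
    (hq0 : 0 ≤ q0) (w e : R3) :
    ‖(2 * (q0 - 1)) • cross qv w - (2 : ℝ) • cross qv (cross qv w) + (2 : ℝ) • cross qv e‖ ≤
      4 * ‖qv‖ ^ 2 * ‖w‖ + 2 * ‖qv‖ * ‖e‖ := by
  have hq0_le : 1 - q0 ≤ ‖qv‖ ^ 2 := by nlinarith
  have hqv_le : ‖qv‖ ≤ 1 := by nlinarith [norm_nonneg qv]
  have hw := norm_cross_le qv w
  calc _ ≤ ‖(2 * (q0 - 1)) • cross qv w‖ + ‖(2 : ℝ) • cross qv (cross qv w)‖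
          + ‖(2 : ℝ) • cross qv e‖ :=
        (norm_add_le _ _).trans (by gcongr; exact norm_sub_le _ _)
    _ = 2 * (1 - q0) * ‖cross qv w‖ + 2 * ‖cross qv (cross qv w)‖ + 2 * ‖cross qv e‖ := by
      rw [norm_smul, norm_smul, norm_smul, Real.norm_eq_abs, abs_of_nonpos (by nlinarith)]
      norm_num
      ring
    _ ≤ 2 * ‖qv‖ ^ 2 * (‖qv‖ * ‖w‖) + 2 * (‖qv‖ * (‖qv‖ * ‖w‖)) + 2 * (‖qv‖ * ‖e‖) := by
      gcongr
      · exact (norm_cross_le _ _).trans (by gcongr)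
      · exact norm_cross_le _ _
    _ ≤ 4 * ‖qv‖ ^ 2 * ‖w‖ + 2 * ‖qv‖ * ‖e‖ := by
      nlinarith [mul_nonneg (sq_nonneg ‖qv‖) (norm_nonneg w), norm_nonneg qv]

theorem stmt_14_general (Rh Rhj : Matrix (Fin 3) (Fin 3) ℝ)
    (hRh : Rhᵀ * Rh = 1 ∧ Rh.det = 1)
    (q0 : ℝ) (qv : R3) (hq : q0 ^ 2 + ‖qv‖ ^ 2 = 1) (hq0 : 0 ≤ q0)
    (p phj pbj : R3) :
    let R := Rh * rod q0 qv
    let g : R3 := ‖p - mulv Rᵀ pbj‖⁻¹ • (p - mulv Rᵀ pbj)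
    let z : R3 := mulv Rhᵀ (mulv Rhj phj)
    let y : R3 := mulv (proj g) z
    let d : R3 := mulv (proj g) (mulv Rhᵀ (pbj - mulv Rhj phj))
    ‖y - (mulv (proj g) p - mulv (proj g) (cross z (2 • qv)) - d)‖ ≤
      4 * ‖qv‖ ^ 2 * ‖pbj‖ + 2 * ‖qv‖ * ‖pbj - mulv Rhj phj‖ := by
  intro R g z y d
  set w : R3 := mulv Rhᵀ pbj
  set e : R3 := mulv Rhᵀ (pbj - mulv Rhj phj)
  have hRhT : Rhᵀᵀ * Rhᵀ = 1 := by rw [transpose_transpose]; exact mul_eq_one_comm.mp hRh.1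
  have hze : z + e = w := by simp only [z, e, w, mulv_sub]; abel
  have hRpbj : mulv Rᵀ pbj = mulv (rod q0 qv)ᵀ w := by rw [transpose_mul, mulv_mul]
  have hproj_p : mulv (proj g) p = mulv (proj g) (mulv Rᵀ pbj) := by
    rw [← sub_eq_zero, ← mulv_sub]
    exact mulv_proj_inv_norm_smul_self _
  have hresidual : y - (mulv (proj g) p - mulv (proj g) (cross z (2 • qv)) - d) =
      mulv (proj g) (w - mulv (rod q0 qv)ᵀ w + cross (w - e) (2 • qv)) := by
    rw [show d = mulv (proj g) e from rfl, ← hRpbj, ← hze, add_sub_cancel_right]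
    simp only [y, mulv_add, mulv_sub, hproj_p]
    abel
  rw [hresidual, sub_mulv_rod_transpose_add_cross]
  calc _ ≤ _ := norm_mulv_proj_le (norm_inv_norm_smul_le_one _) _
    _ ≤ _ := norm_rodrigues_residual_le hq hq0 w e
    _ = _ := by rw [norm_mulv_of_transpose_mul_self hRhT, norm_mulv_of_transpose_mul_self hRhT]

/-- quantitative version of the measurement representation of
the bearing output used by the observer. -/
theorem stmt_14 (Rh Rhj : Matrix (Fin 3) (Fin 3) ℝ)
    (hRh : Rhᵀ * Rh = 1 ∧ Rh.det = 1) (hRhj : Rhjᵀ * Rhj = 1 ∧ Rhj.det = 1)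
    (q0 : ℝ) (qv : R3) (hq : q0 ^ 2 + ‖qv‖ ^ 2 = 1) (hq0 : 0 ≤ q0)
    (p phj pbj : R3)
    (hne : p - mulv (Rh * rod q0 qv)ᵀ pbj ≠ 0) :
    let R := Rh * rod q0 qv
    let g : R3 := ‖p - mulv Rᵀ pbj‖⁻¹ • (p - mulv Rᵀ pbj)
    let z : R3 := mulv Rhᵀ (mulv Rhj phj)
    let y : R3 := mulv (proj g) z
    let d : R3 := mulv (proj g) (mulv Rhᵀ (pbj - mulv Rhj phj))
    ‖y - (mulv (proj g) p - mulv (proj g) (cross z (2 • qv)) - d)‖ ≤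
      4 * ‖qv‖ ^ 2 * ‖pbj‖ + 2 * ‖qv‖ * ‖pbj - mulv Rhj phj‖ :=
  stmt_14_general Rh Rhj hRh q0 qv hq hq0 p phj pbj
end
end
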